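/- A word w over the alphabet {n, N, i, I} is the label-code of a nonempty binary tree (read left to right, labelling internal nodes by lowercase and leaves other than the leftmost by uppercase, with 'n'/'N' for nodes whose label rule applies and 'i'/'I' otherwise) if and only if: (i) w starts with 'n'; (ii) w ends with 'I'; (iii) w alternates lowercase and uppercase letters; (iv) every prefix u of w satisfies |u|_n + |u|_N ≥ |u|_i + |u|_I; and (v) |w|_n + |w|_N = |w|_i + |w|_I. Moreover this encoding is a bijection between binary trees with k carets and admissible words of length 2k. -/

import Mathlib

/-- The alphabet `{n, N, i, I}` used to encode binary trees. -/
inductive Letter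
  | n | N | i | I
deriving DecidableEq, Repr

/-- Uppercase letters are the leaf labels `N`, `I`. -/
def Letter.isUpper : Letter → Bool
  | .N => true
  | .I => true
  | _ => false

/-- Lowercase version of a letter. -/
def Letter.toLower : Letter → Letter
  | .N => .n
  | .I => .i
  | x => x

/-- Full binary trees: every internal node (caret) has exactly two children. -/
inductive BTree
  | leaf
  | node (l r : BTree)
deriving DecidableEq, Repr

/-- Number of carets (internal nodes). -/
def BTree.carets : BTree → ℕ
  | .leaf => 0
  | .node l r => l.carets + r.carets + 1

/-- Number of leaves. -/
def BTree.numLeaves : BTree → ℕ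
  | .leaf => 1
  | .node l r => l.numLeaves + r.numLeaves

/-- Encoding of a tree, reading labels left to right.  The boolean parameter
records whether the position of this subtree is of `N`-type (`true`) or
`I`-type (`false`): leaves get the corresponding uppercase letter, internal
nodes the corresponding lowercase letter, with the left subtree of a caret in
`N`-position and the right subtree in `I`-position. -/
def enc : BTree → Bool → List Letter
  | .leaf, b => [if b then .N else .I]
  | .node l r, b => enc l true ++ [if b then .n else .i] ++ enc r false

/-- The encoding word with the leftmost-leaf label `N` prepended (the word
`ψ_k(t)` of length `2k+1`). -/
def fullcode (t : BTree) : List Letter := enc t true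

/-- The encoding word of the paper: the leftmost leaf is not labelled, so the
word of a tree with `k` carets has length `2k`. -/
def code (t : BTree) : List Letter := (fullcode t).tail

/-- Admissibility conditions (i)–(v): starts with `n`, ends with `I`, alternates
lowercase and uppercase letters, every prefix has at least as many `n`,`N`'s as
`i`,`I`'s, and the total counts are equal. -/
def Admissible (w : List Letter) : Prop :=
  w.head? = some .n ∧
  w.getLast? = some .I ∧
  List.Chain' (fun a b => a.isUpper ≠ b.isUpper) w ∧
  (∀ u : List Letter, u <+: w →
    u.count Letter.i + u.count Letter.I ≤ u.count Letter.n + u.count Letter.N) ∧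
  w.count Letter.n + w.count Letter.N = w.count Letter.i + w.count Letter.I

/-!
Read `n`, `N` as up-steps and `i`, `I` as down-steps. By the recursions
`code (node l r) = code l ++ n :: enc r false` and
`enc (node l r) false = N :: (code l ++ i :: enc r false)`, codes are Dyck paths and the words
`enc t false` are first-passage paths (total `-1`, every proper prefix `≥ 0`), with alternating
letter case. First-passage paths form a prefix-free set, and none of them has a suffix made of an
up-step followed by another first-passage path, so both recursions can be undone uniquely: `code` is
injective. Conversely,
cutting at the first passage below the starting level splits an alternating Dyck path as
`n :: (f ++ c)` and a first-passage path as `N :: (c ++ i :: f)`; by induction on length every such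
word is a code, in the first case of the tree of `c` with the tree of `f` grafted onto its leftmost
leaf. Cases stay aligned across these cuts because a word's length and balance have equal parity.
-/

def Letter.val : Letter → ℤ
  | .n | .N => 1
  | .i | .I => -1

theorem Letter.val_eq_one_or_neg_one (a : Letter) : a.val = 1 ∨ a.val = -1 := by
  cases a <;> simp [Letter.val]

theorem Letter.eq_of_isUpper_eq_of_val_eq {a b : Letter} (hu : a.isUpper = b.isUpper)
    (hv : a.val = b.val) : a = b := by
  cases a <;> cases b <;> simp_all [Letter.isUpper, Letter.val]

def balance (w : List Letter) : ℤ := (w.map Letter.val).sum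

@[simp] theorem balance_nil : balance [] = 0 := rfl

@[simp] theorem balance_cons (a : Letter) (w : List Letter) :
    balance (a :: w) = a.val + balance w := by
  simp [balance]

@[simp] theorem balance_append (u v : List Letter) : balance (u ++ v) = balance u + balance v := by
  simp [balance]

theorem balance_eq_count_sub_count (w : List Letter) :
    balance w =
      ((w.count .n + w.count .N : ℕ) : ℤ) - ((w.count .i + w.count .I : ℕ) : ℤ) := by
  induction w with
  | nil => simp
  | cons a w ih => cases a <;> simp [ih, Letter.val] <;> ring

theorem odd_balance_iff (w : List Letter) : Odd (balance w) ↔ Odd w.length := by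
  induction w with
  | nil => simp
  | cons a w ih =>
    rcases a.val_eq_one_or_neg_one with ha | ha <;>
      simp [ha, Int.odd_add, Nat.odd_add_one, ← ih, Int.not_odd_iff_even]

def Alternating : Bool → List Letter → Prop
  | _, [] => True
  | b, a :: w => a.isUpper = b ∧ Alternating (!b) w

theorem alternating_append (b : Bool) (u v : List Letter) :
    Alternating b (u ++ v) ↔ Alternating b u ∧ Alternating (b ^^ decide (Odd u.length)) v := by
  induction u generalizing b with
  | nil => simp [Alternating]
  | cons a u ih =>
    have hodd : decide (Odd (u.length + 1)) = !decide (Odd u.length) := by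
      simp only [Nat.odd_add_one, decide_not]
    simp only [List.cons_append, Alternating, ih, List.length_cons, hodd, and_assoc]
    cases b <;> cases decide (Odd u.length) <;> rfl

theorem alternating_iff_isChain (b : Bool) (w : List Letter) :
    Alternating b w ↔
      List.IsChain (fun a c => a.isUpper ≠ c.isUpper) w ∧ ∀ a ∈ w.head?, a.isUpper = b := by
  induction w generalizing b with
  | nil => simp [Alternating]
  | cons a w ih =>
    rcases w with _ | ⟨c, w⟩
    · simp [Alternating]
    · rw [Alternating, ih]
      simp only [List.isChain_cons_cons, List.head?_cons, Option.mem_def, Option.some.injEq,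
        forall_eq']
      generalize a.isUpper = x
      generalize c.isUpper = y
      cases b <;> cases x <;> cases y <;> simp

theorem prefix_append_iff {u v w : List Letter} :
    u <+: v ++ w ↔ u <+: v ∨ ∃ w', w' <+: w ∧ u = v ++ w' := by
  constructor
  · intro h
    rcases List.prefix_or_prefix_of_prefix h (List.prefix_append v w) with h' | ⟨w', rfl⟩
    · exact .inl h'
    · exact .inr ⟨w', (List.prefix_append_right_inj v).1 h, rfl⟩
  · rintro (h | ⟨w', hw', rfl⟩)
    · exact h.trans (List.prefix_append v w)
    · exact (List.prefix_append_right_inj v).2 hw'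

def Dyck (w : List Letter) : Prop :=
  balance w = 0 ∧ ∀ u, u <+: w → 0 ≤ balance u

def FirstPassage (w : List Letter) : Prop :=
  balance w = -1 ∧ ∀ u, u <+: w → u ≠ w → 0 ≤ balance u

theorem dyck_nil : Dyck [] := ⟨rfl, fun u hu => by simp [List.prefix_nil.1 hu]⟩

theorem firstPassage_singleton {x : Letter} (hx : x.val = -1) : FirstPassage [x] := by
  refine ⟨by simpa using hx, fun u hu hne => ?_⟩
  rcases List.prefix_cons_iff.1 hu with rfl | ⟨t, rfl, ht⟩
  · simp
  · simp [List.prefix_nil.1 ht] at hne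

theorem Dyck.append {c d : List Letter} (hc : Dyck c) (hd : Dyck d) : Dyck (c ++ d) := by
  refine ⟨by simp [hc.1, hd.1], fun u hu => ?_⟩
  rcases prefix_append_iff.1 hu with hu | ⟨v, hv, rfl⟩
  · exact hc.2 u hu
  · simpa [hc.1] using hd.2 v hv

theorem Dyck.append_firstPassage {d f : List Letter} (hd : Dyck d) (hf : FirstPassage f) :
    FirstPassage (d ++ f) := by
  refine ⟨by simp [hd.1, hf.1], fun u hu hne => ?_⟩
  rcases prefix_append_iff.1 hu with hu | ⟨v, hv, rfl⟩
  · exact hd.2 u hu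
  · simpa [hd.1] using hf.2 v hv (by rintro rfl; exact hne rfl)

theorem FirstPassage.dyck_cons {a : Letter} {f : List Letter} (ha : a.val = 1)
    (hf : FirstPassage f) : Dyck (a :: f) := by
  refine ⟨by simp [ha, hf.1], fun u hu => ?_⟩
  rcases List.prefix_cons_iff.1 hu with rfl | ⟨v, rfl, hv⟩
  · simp
  · by_cases hvf : v = f
    · simp [ha, hvf, hf.1]
    · have := hf.2 v hv hvf
      simp only [balance_cons, ha]
      omega

theorem FirstPassage.eq_of_append_eq_append {u u' s s' : List Letter} (hu : FirstPassage u)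
    (hu' : FirstPassage u') (h : u ++ s = u' ++ s') : u = u' := by
  have hpre : u <+: u' ++ s' := h ▸ List.prefix_append u s
  rcases List.prefix_or_prefix_of_prefix hpre (List.prefix_append u' s') with h' | h' <;>
    by_contra hne
  · have := hu'.2 u h' hne; rw [hu.1] at this; omega
  · have := hu.2 u' h' (Ne.symm hne); rw [hu'.1] at this; omega

theorem FirstPassage.eq_of_append_cons_eq_append_cons {a : Letter} {c c' f f' : List Letter}
    (hf : FirstPassage f) (hf' : FirstPassage f') (ha : a.val = 1)
    (h : c ++ a :: f = c' ++ a :: f') : f = f' := by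
  have key : ∀ {f f' : List Letter}, FirstPassage f → FirstPassage f' → ¬ a :: f' <:+ f := by
    rintro f f' hf hf' ⟨x, rfl⟩
    have := hf.2 x (List.prefix_append _ _) (by simp)
    have := hf.1
    simp only [balance_append, balance_cons, ha, hf'.1] at this
    omega
  have hsuf : a :: f <:+ c' ++ a :: f' := h ▸ List.suffix_append c (a :: f)
  rcases List.suffix_or_suffix_of_suffix hsuf (List.suffix_append c' (a :: f')) with h' | h'
  · rcases List.suffix_cons_iff.1 h' with h' | h'
    · exact (List.cons.inj h').2
    · exact absurd h' (key hf' hf)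
  · rcases List.suffix_cons_iff.1 h' with h' | h'
    · exact (List.cons.inj h').2.symm
    · exact absurd h' (key hf hf')

theorem exists_append_of_prefix_balance_neg {w : List Letter}
    (h : ∃ u, u <+: w ∧ balance u < 0) : ∃ p q, w = p ++ q ∧ FirstPassage p := by
  induction w using List.reverseRecOn with
  | nil => obtain ⟨u, hu, hneg⟩ := h; simp [List.prefix_nil.1 hu] at hneg
  | append_singleton w x ih =>
    by_cases hw : ∃ u, u <+: w ∧ balance u < 0
    · obtain ⟨p, q, rfl, hp⟩ := ih hw
      exact ⟨p, q ++ [x], by simp, hp⟩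
    simp only [not_exists, not_and, not_lt] at hw
    refine ⟨w ++ [x], [], by simp, ?_, fun u hu hne => ?_⟩
    · obtain ⟨u, hu, hneg⟩ := h
      rcases List.prefix_concat_iff.1 hu with rfl | hu
      · have := hw w (List.prefix_refl w)
        rcases x.val_eq_one_or_neg_one with hx | hx <;> simp [hx] at hneg ⊢ <;> omega
      · exact absurd (hw u hu) (not_le.2 hneg)
    · exact hw u ((List.prefix_concat_iff.1 hu).resolve_left hne)

theorem Dyck.alternating_append_iff {c v : List Letter} {b : Bool} (hc : Dyck c) :
    Alternating b (c ++ v) ↔ Alternating b c ∧ Alternating b v := by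
  have : ¬ Odd c.length := by rw [← odd_balance_iff, hc.1]; decide
  simp [alternating_append, this]

theorem FirstPassage.alternating_append_iff {f v : List Letter} {b : Bool}
    (hf : FirstPassage f) : Alternating b (f ++ v) ↔ Alternating b f ∧ Alternating (!b) v := by
  have : Odd f.length := by rw [← odd_balance_iff, hf.1]; decide
  simp [alternating_append, this]

theorem Dyck.exists_of_cons {a : Letter} {w : List Letter} (h : Dyck (a :: w)) :
    a.val = 1 ∧ ∃ f c, w = f ++ c ∧ FirstPassage f ∧ Dyck c := by
  have ha : a.val = 1 := by
    have := h.2 [a] (by simp)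
    rcases a.val_eq_one_or_neg_one with ha | ha <;> simp [ha] at this ⊢
  have hw : balance w = -1 := by have := h.1; simp [ha] at this; omega
  obtain ⟨f, c, rfl, hf⟩ :=
    exists_append_of_prefix_balance_neg ⟨w, List.prefix_rfl, by omega⟩
  refine ⟨ha, f, c, rfl, hf, ⟨by simp [hf.1] at hw; omega, fun u hu => ?_⟩⟩
  have := h.2 (a :: (f ++ u)) (by simpa using hu)
  simp [ha, hf.1] at this
  omega

theorem FirstPassage.exists_of_cons {a : Letter} {w : List Letter} (h : FirstPassage (a :: w))
    (hw : w ≠ []) : a.val = 1 ∧ ∃ p f, w = p ++ f ∧ FirstPassage p ∧ FirstPassage f := by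
  have ha : a.val = 1 := by
    have := h.2 [a] (by simp) (by simpa using hw.symm)
    rcases a.val_eq_one_or_neg_one with ha | ha <;> simp [ha] at this ⊢
  have hw : balance w = -2 := by have := h.1; simp [ha] at this; omega
  obtain ⟨p, f, rfl, hp⟩ :=
    exists_append_of_prefix_balance_neg ⟨w, List.prefix_rfl, by omega⟩
  refine ⟨ha, p, f, rfl, hp, ⟨by simp [hp.1] at hw; omega, fun u hu hne => ?_⟩⟩
  have := h.2 (a :: (p ++ u)) (by simpa using hu) (by simpa using hne)
  simp [ha, hp.1] at this
  omega

theorem FirstPassage.exists_eq_append_singleton {p : List Letter} (h : FirstPassage p) :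
    ∃ c x, p = c ++ [x] ∧ Dyck c ∧ x.val = -1 := by
  rcases List.eq_nil_or_concat' p with rfl | ⟨c, x, rfl⟩
  · exact absurd h.1 (by simp)
  have hc : 0 ≤ balance c := h.2 c (List.prefix_append c [x]) (by simp)
  have hx : x.val = -1 := by
    have := h.1
    rcases x.val_eq_one_or_neg_one with hx | hx <;> simp [hx] at this ⊢; omega
  refine ⟨c, x, rfl, ⟨by have := h.1; simp [hx] at this; omega, fun u hu => ?_⟩, hx⟩
  exact h.2 u (hu.trans (List.prefix_append c [x])) (by
    rintro rfl; simpa using hu.length_le)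

/-- `IsCodeWord` describes the words `code t`, `IsRightWord` the words `enc t false` of subtrees in
right-child position (their leftmost leaf included). -/
structure IsCodeWord (w : List Letter) : Prop where
  alternating : Alternating false w
  dyck : Dyck w

structure IsRightWord (w : List Letter) : Prop where
  alternating : Alternating true w
  firstPassage : FirstPassage w

theorem isCodeWord_nil : IsCodeWord [] := ⟨trivial, dyck_nil⟩

theorem isRightWord_I : IsRightWord [.I] := ⟨⟨rfl, trivial⟩, firstPassage_singleton rfl⟩

theorem isCodeWord_append_cons_n {c f : List Letter} (hc : IsCodeWord c) (hf : IsRightWord f) :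
    IsCodeWord (c ++ .n :: f) :=
  ⟨hc.dyck.alternating_append_iff.2 ⟨hc.alternating, rfl, hf.alternating⟩,
    hc.dyck.append (hf.firstPassage.dyck_cons rfl)⟩

theorem isRightWord_N_cons_append_cons_i {c f : List Letter} (hc : IsCodeWord c)
    (hf : IsRightWord f) : IsRightWord (.N :: (c ++ .i :: f)) := by
  refine ⟨⟨rfl, hc.dyck.alternating_append_iff.2 ⟨hc.alternating, rfl, hf.alternating⟩⟩,
    ?_⟩
  have hprime : Dyck (.N :: (c ++ [.i])) :=
    (hc.dyck.append_firstPassage (firstPassage_singleton rfl)).dyck_cons rfl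
  simpa using hprime.append_firstPassage hf.firstPassage

theorem IsCodeWord.eq_nil_or {w : List Letter} (h : IsCodeWord w) :
    w = [] ∨ ∃ f c, w = .n :: (f ++ c) ∧ IsRightWord f ∧ IsCodeWord c := by
  rcases w with _ | ⟨a, w⟩
  · exact .inl rfl
  obtain ⟨ha, f, c, rfl, hf, hc⟩ := h.dyck.exists_of_cons
  obtain ⟨hau, hfc⟩ := h.alternating
  obtain ⟨hfa, hca⟩ := hf.alternating_append_iff.1 hfc
  obtain rfl : a = .n := Letter.eq_of_isUpper_eq_of_val_eq hau ha
  exact .inr ⟨f, c, rfl, ⟨hfa, hf⟩, ⟨hca, hc⟩⟩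

theorem IsRightWord.eq_I_or {w : List Letter} (h : IsRightWord w) :
    w = [.I] ∨ ∃ c f, w = .N :: (c ++ .i :: f) ∧ IsCodeWord c ∧ IsRightWord f := by
  rcases w with _ | ⟨a, w⟩
  · exact absurd h.firstPassage.1 (by simp)
  obtain ⟨hau, hwa⟩ := h.alternating
  by_cases hw : w = []
  · subst hw
    have ha : a.val = -1 := by simpa using h.firstPassage.1
    exact .inl (by rw [Letter.eq_of_isUpper_eq_of_val_eq (b := .I) hau ha])
  obtain ⟨ha, p, f, rfl, hp, hf⟩ := h.firstPassage.exists_of_cons hw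
  obtain ⟨c, x, rfl, hc, hx⟩ := hp.exists_eq_append_singleton
  obtain ⟨hpa, hfa⟩ := hp.alternating_append_iff.1 hwa
  obtain ⟨hca, hxu, -⟩ := hc.alternating_append_iff.1 hpa
  refine .inr ⟨c, f, ?_, ⟨hca, hc⟩, ⟨hfa, hf⟩⟩
  rw [Letter.eq_of_isUpper_eq_of_val_eq (b := .N) hau ha,
    Letter.eq_of_isUpper_eq_of_val_eq (b := .i) hxu hx]
  simp

@[simp] theorem code_leaf : code .leaf = [] := rfl

@[simp] theorem enc_leaf_false : enc .leaf false = [.I] := rfl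

theorem enc_true (t : BTree) : enc t true = .N :: code t := by
  induction t with
  | leaf => rfl
  | node l r ihl _ => rw [code, fullcode, enc, ihl]; rfl

theorem code_node (l r : BTree) : code (.node l r) = code l ++ .n :: enc r false := by
  rw [code, fullcode, enc, enc_true]; simp

theorem enc_node_false (l r : BTree) :
    enc (.node l r) false = .N :: (code l ++ .i :: enc r false) := by
  rw [enc, enc_true]; simp

theorem code_eq_nil_iff {t : BTree} : code t = [] ↔ t = .leaf := by
  cases t <;> simp [code_node]

theorem length_enc (t : BTree) (b : Bool) : (enc t b).length = 2 * t.carets + 1 := by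
  induction t generalizing b with
  | leaf => rfl
  | node l r ihl ihr => simp [enc, BTree.carets, ihl, ihr]; ring

theorem length_code (t : BTree) : (code t).length = 2 * t.carets := by
  simpa [enc_true] using length_enc t true

def BTree.graftLeftmost : BTree → BTree → BTree
  | .leaf, r => .node .leaf r
  | .node l r', r => .node (l.graftLeftmost r) r'

theorem code_graftLeftmost (r t : BTree) :
    code (t.graftLeftmost r) = .n :: (enc r false ++ code t) := by
  induction t with
  | leaf => simp [BTree.graftLeftmost, code_node]
  | node l r' ihl _ => simp [BTree.graftLeftmost, code_node, ihl]

theorem isCodeWord_code_and_isRightWord_enc (t : BTree) :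
    IsCodeWord (code t) ∧ IsRightWord (enc t false) := by
  induction t with
  | leaf => exact ⟨isCodeWord_nil, isRightWord_I⟩
  | node l r ihl ihr =>
    rw [code_node, enc_node_false]
    exact ⟨isCodeWord_append_cons_n ihl.1 ihr.2, isRightWord_N_cons_append_cons_i ihl.1 ihr.2⟩

theorem exists_code_eq_and_exists_enc_eq (w : List Letter) :
    (IsCodeWord w → ∃ t, code t = w) ∧ (IsRightWord w → ∃ t, enc t false = w) := by
  induction hk : w.length using Nat.strong_induction_on generalizing w with
  | _ k ih =>
    subst hk
    have ih' (v : List Letter) (hv : v.length < w.length) := ih v.length hv v rfl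
    refine ⟨fun hw => ?_, fun hw => ?_⟩
    · rcases hw.eq_nil_or with rfl | ⟨f, c, rfl, hf, hc⟩
      · exact ⟨.leaf, rfl⟩
      obtain ⟨r, rfl⟩ := (ih' f (by simp)).2 hf
      obtain ⟨t, rfl⟩ := (ih' c (by simp)).1 hc
      exact ⟨t.graftLeftmost r, code_graftLeftmost r t⟩
    · rcases hw.eq_I_or with rfl | ⟨c, f, rfl, hc, hf⟩
      · exact ⟨.leaf, rfl⟩
      obtain ⟨l, rfl⟩ := (ih' c (by simp)).1 hc
      obtain ⟨r, rfl⟩ := (ih' f (by simp; omega)).2 hf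
      exact ⟨.node l r, enc_node_false l r⟩

theorem code_injective_and_enc_false_injective (t t' : BTree) :
    (code t = code t' → t = t') ∧ (enc t false = enc t' false → t = t') := by
  induction t generalizing t' with
  | leaf => cases t' <;> simp [code_node, enc_node_false]
  | node l r ihl ihr =>
    cases t' with
    | leaf => simp [code_node, enc_node_false]
    | node l' r' =>
      have hr := (isCodeWord_code_and_isRightWord_enc r).2.firstPassage
      have hr' := (isCodeWord_code_and_isRightWord_enc r').2.firstPassage
      refine ⟨fun h => ?_, fun h => ?_⟩
      · rw [code_node, code_node] at h
        have hrr := hr.eq_of_append_cons_eq_append_cons hr' rfl h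
        rw [hrr, List.append_cancel_right_eq] at h
        rw [(ihl l').1 h, (ihr r').2 hrr]
      · rw [enc_node_false, enc_node_false, List.cons.injEq] at h
        have hprime : ∀ t : BTree, FirstPassage (code t ++ [.i]) := fun t =>
          (isCodeWord_code_and_isRightWord_enc t).1.dyck.append_firstPassage
            (firstPassage_singleton rfl)
        have hll := (hprime l).eq_of_append_eq_append (hprime l') (by simpa using h.2)
        rw [List.append_cancel_right_eq] at hll
        rw [hll, List.append_cancel_left_eq, List.cons.injEq] at h
        rw [(ihl l').1 hll, (ihr r').2 h.2.2]

theorem code_injective : Function.Injective code :=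
  fun t t' => (code_injective_and_enc_false_injective t t').1

theorem IsCodeWord.getLast?_eq_I {w : List Letter} (hw : IsCodeWord w) (hne : w ≠ []) :
    w.getLast? = some .I := by
  obtain ⟨c, x, rfl⟩ := (List.eq_nil_or_concat' w).resolve_left hne
  have hc : 0 ≤ balance c := hw.dyck.2 c (List.prefix_append c [x])
  have hx : x.val = -1 := by
    have := hw.dyck.1
    rcases x.val_eq_one_or_neg_one with hx | hx <;> simp [hx] at this ⊢; omega
  have hodd : Odd c.length := by
    have := hw.dyck.1
    simp only [balance_append, balance_cons, balance_nil, hx] at this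
    rw [← odd_balance_iff, show balance c = 1 by omega]; decide
  have hxu : x.isUpper = true := by
    have := hw.alternating
    simp only [alternating_append, hodd, decide_true, Bool.false_xor, Alternating] at this
    exact this.2.1
  simp [Letter.eq_of_isUpper_eq_of_val_eq (b := .I) hxu hx]

theorem IsCodeWord.head?_eq_n {w : List Letter} (hw : IsCodeWord w) (hne : w ≠ []) :
    w.head? = some .n := by
  rcases hw.eq_nil_or with rfl | ⟨f, c, rfl, -, -⟩
  · exact absurd rfl hne
  · rfl

theorem balance_nonneg_iff (u : List Letter) :
    0 ≤ balance u ↔ u.count .i + u.count .I ≤ u.count .n + u.count .N := by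
  rw [balance_eq_count_sub_count]; omega

theorem balance_eq_zero_iff (u : List Letter) :
    balance u = 0 ↔ u.count .n + u.count .N = u.count .i + u.count .I := by
  rw [balance_eq_count_sub_count]; omega

theorem admissible_iff_isCodeWord (w : List Letter) :
    Admissible w ↔ w ≠ [] ∧ IsCodeWord w := by
  constructor
  · rintro ⟨hhead, -, hchain, hprefix, hcount⟩
    have hne : w ≠ [] := by rintro rfl; simp at hhead
    refine ⟨hne,
      (alternating_iff_isChain false w).2 ⟨hchain, by simp [hhead, Letter.isUpper]⟩,
      (balance_eq_zero_iff w).2 hcount, fun u hu => (balance_nonneg_iff u).2 (hprefix u hu)⟩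
  · rintro ⟨hne, hw⟩
    exact ⟨hw.head?_eq_n hne, hw.getLast?_eq_I hne,
      ((alternating_iff_isChain false w).1 hw.alternating).1,
      fun u hu => (balance_nonneg_iff u).1 (hw.dyck.2 u hu), (balance_eq_zero_iff w).1 hw.dyck.1⟩

/-- A word encodes a nonempty binary tree iff it is admissible; moreover the
encoding is a bijection between binary trees with `k` carets and admissible
words of length `2k`. -/
theorem code_admissible_bijection :
    (∀ w : List Letter, (∃ t : BTree, t ≠ .leaf ∧ code t = w) ↔ Admissible w) ∧
    (∀ k : ℕ, Set.BijOn code {t : BTree | t ≠ .leaf ∧ t.carets = k}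
      {w : List Letter | Admissible w ∧ w.length = 2 * k}) := by
  have hrange (w : List Letter) : (∃ t : BTree, t ≠ .leaf ∧ code t = w) ↔ Admissible w := by
    rw [admissible_iff_isCodeWord]
    constructor
    · rintro ⟨t, ht, rfl⟩
      exact ⟨mt code_eq_nil_iff.1 ht, (isCodeWord_code_and_isRightWord_enc t).1⟩
    · rintro ⟨hne, hw⟩
      obtain ⟨t, rfl⟩ := (exists_code_eq_and_exists_enc_eq w).1 hw
      exact ⟨t, mt code_eq_nil_iff.2 hne, rfl⟩
  refine ⟨hrange, fun k => ⟨?_, code_injective.injOn, ?_⟩⟩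
  · rintro t ⟨ht, rfl⟩
    exact ⟨(hrange _).1 ⟨t, ht, rfl⟩, length_code t⟩
  · rintro w ⟨hw, hlen⟩
    obtain ⟨t, ht, rfl⟩ := (hrange w).2 hw
    exact ⟨t, ⟨ht, by rw [length_code] at hlen; omega⟩, rfl⟩
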